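/- Under the two-stage randomized design with J_a ≥ 2 for all mechanisms a, the block-diagonal covariance estimator D̂ is conservative in expectation: the 2m × 2m matrix E[D̂] − D is positive semidefinite, where D = J · cov(Ŷ). -/

import Mathlib

open scoped BigOperators

noncomputable section

/-- A two-stage randomized design: `J` clusters, the `j`-th of size `n j`,
`m` treatment assignment mechanisms, `Jc a` clusters assigned to mechanism `a`,
`n1 j a` treated units in cluster `j` under mechanism `a`, and fixed potential
outcomes `Y j i z a` (with `z : Bool`, `true` = treatment). -/
structure TwoStageDesign where
  J : ℕ
  m : ℕ
  n : Fin J → ℕ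
  Jc : Fin m → ℕ
  n1 : Fin J → Fin m → ℕ
  Y : (j : Fin J) → Fin (n j) → Bool → Fin m → ℝ

namespace TwoStageDesign

variable (d : TwoStageDesign)

/-- The number of units in cluster `j` assigned to condition `z` under mechanism `a`. -/
def nz (z : Bool) (j : Fin d.J) (a : Fin d.m) : ℕ :=
  if z then d.n1 j a else d.n j - d.n1 j a

/-- Admissible first-stage assignments: mechanism `a` is given to exactly `Jc a` clusters. -/
def mechA : Finset (Fin d.J → Fin d.m) :=
  Finset.univ.filter fun A => ∀ a, (Finset.univ.filter fun j => A j = a).card = d.Jc a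

/-- Admissible second-stage assignments given the first stage `A`: the treated set in
cluster `j` has exactly `n1 j (A j)` units. -/
def treatA (A : Fin d.J → Fin d.m) : Finset ((j : Fin d.J) → Finset (Fin (d.n j))) :=
  Finset.univ.filter fun S => ∀ j, (S j).card = d.n1 j (A j)

/-- Expectation with respect to the two-stage randomization: `A` is uniform on the
admissible first-stage assignments and, given `A`, the treated sets are uniform on the
admissible second-stage assignments (independently across clusters). -/
def expec (f : (Fin d.J → Fin d.m) → ((j : Fin d.J) → Finset (Fin (d.n j))) → ℝ) : ℝ :=
  ∑ A ∈ d.mechA, ∑ S ∈ d.treatA A,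
    f A S / ((d.mechA.card : ℝ) * ((d.treatA A).card : ℝ))

/-- Covariance under the two-stage randomization. -/
def cov (f g : (Fin d.J → Fin d.m) → ((j : Fin d.J) → Finset (Fin (d.n j))) → ℝ) : ℝ :=
  d.expec fun A S => (f A S - d.expec f) * (g A S - d.expec g)

/-- Variance under the two-stage randomization. -/
def var (f : (Fin d.J → Fin d.m) → ((j : Fin d.J) → Finset (Fin (d.n j))) → ℝ) : ℝ :=
  d.cov f f

/-- Observed outcome of unit `i` in cluster `j`: `Y_{ij} = Y_{ij}(Z_{ij}, A_j)`. -/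
def Yobs (A : Fin d.J → Fin d.m) (S : (j : Fin d.J) → Finset (Fin (d.n j)))
    (j : Fin d.J) (i : Fin (d.n j)) : ℝ :=
  d.Y j i (decide (i ∈ S j)) (A j)

/-- `Ŷ_j(z)`: average observed outcome among units of cluster `j` with `Z_{ij} = z`. -/
def hatYj (A : Fin d.J → Fin d.m) (S : (j : Fin d.J) → Finset (Fin (d.n j)))
    (z : Bool) (j : Fin d.J) : ℝ :=
  (∑ i ∈ Finset.univ.filter (fun i => decide (i ∈ S j) = z), d.Yobs A S j i) /
    ((Finset.univ.filter (fun i : Fin (d.n j) => decide (i ∈ S j) = z)).card : ℝ)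

/-- `Ŷ(z,a)`: average of `Ŷ_j(z)` over clusters with `A_j = a`. -/
def hatY (A : Fin d.J → Fin d.m) (S : (j : Fin d.J) → Finset (Fin (d.n j)))
    (z : Bool) (a : Fin d.m) : ℝ :=
  (∑ j ∈ Finset.univ.filter (fun j => A j = a), d.hatYj A S z j) / (d.Jc a : ℝ)

/-- `Ȳ_j(z,a)`: cluster-level average potential outcome. -/
def Ybarj (j : Fin d.J) (z : Bool) (a : Fin d.m) : ℝ :=
  (∑ i, d.Y j i z a) / (d.n j : ℝ)

/-- `Ȳ(z,a)`: population-level average potential outcome. -/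
def Ybar (z : Bool) (a : Fin d.m) : ℝ :=
  (∑ j, d.Ybarj j z a) / (d.J : ℝ)

/-- `σ_j²(z,z';a,a')`: within-cluster covariance of the potential outcomes. -/
def sigU (j : Fin d.J) (z z' : Bool) (a a' : Fin d.m) : ℝ :=
  (∑ i, (d.Y j i z a - d.Ybarj j z a) * (d.Y j i z' a' - d.Ybarj j z' a')) /
    ((d.n j : ℝ) - 1)

/-- `σ_b²(z,z';a,a')`: between-cluster covariance of the cluster averages. -/
def sigB (z z' : Bool) (a a' : Fin d.m) : ℝ :=
  (∑ j, (d.Ybarj j z a - d.Ybar z a) * (d.Ybarj j z' a' - d.Ybar z' a')) /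
    ((d.J : ℝ) - 1)

/-- `σ̂_b²(z,z';a)`: between-cluster sample covariance among clusters with `A_j = a`. -/
def sigBhat (A : Fin d.J → Fin d.m) (S : (j : Fin d.J) → Finset (Fin (d.n j)))
    (z z' : Bool) (a : Fin d.m) : ℝ :=
  (∑ j ∈ Finset.univ.filter (fun j => A j = a),
      (d.hatYj A S z j - d.hatY A S z a) * (d.hatYj A S z' j - d.hatY A S z' a)) /
    ((d.Jc a : ℝ) - 1)

end TwoStageDesign

/-!
Write `μ_j(z,a)` for the mean of `Ŷ_j(z)` over the second-stage randomization of cluster `j`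
under mechanism `a`. The first stage is exchangeable across clusters, so
`P(A_j = a) = J_a / J` and, for `j ≠ k`, `P(A_j = a, A_k = b) = J_a (J_b - 1{a = b}) / (J (J - 1))`;
given `A`, the clusters are randomized independently. These moments give every entry of `E[D̂]`
and of `D` in closed form. The within-cluster second moments cancel, and `E[D̂] - D` is the
between-cluster sample covariance matrix `(J - 1)⁻¹ ∑_j (μ_j - μ̄)(μ_j - μ̄)ᵀ` of the vectors
`μ_j = (μ_j(z,a))_{(a,z)}`, a Gram matrix.
-/

open Finset

section AssignmentsWithCounts

variable {ι κ : Type*} [Fintype ι] [DecidableEq ι] [Fintype κ] [DecidableEq κ]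

def assignmentsWithCounts (c : κ → ℕ) : Finset (ι → κ) :=
  {A | ∀ a, #{i | A i = a} = c a}

variable {c : κ → ℕ}

lemma mem_assignmentsWithCounts {A : ι → κ} :
    A ∈ assignmentsWithCounts c ↔ ∀ a, #{i | A i = a} = c a := by
  simp [assignmentsWithCounts]

lemma comp_perm_mem_assignmentsWithCounts (σ : Equiv.Perm ι) (A : ι → κ) :
    A ∘ σ ∈ assignmentsWithCounts c ↔ A ∈ assignmentsWithCounts c := by
  have hcard : ∀ a, #{i | A (σ i) = a} = #{i | A i = a} := fun a =>
    card_equiv σ (by simp)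
  simp [assignmentsWithCounts, hcard]

lemma card_filter_comp_perm (σ : Equiv.Perm ι) (p : (ι → κ) → Prop) [DecidablePred p] :
    #{A ∈ assignmentsWithCounts c | p (A ∘ σ)} = #{A ∈ assignmentsWithCounts c | p A} :=
  card_equiv (σ.symm.arrowCongr (Equiv.refl κ)) fun A => by
    rw [mem_filter, mem_filter]
    exact and_congr_left' (comp_perm_mem_assignmentsWithCounts σ A).symm

lemma card_filter_apply_eq_mul_card (i : ι) (a : κ) :
    #{A ∈ assignmentsWithCounts c | A i = a} * Fintype.card ι
      = #(assignmentsWithCounts c : Finset (ι → κ)) * c a := by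
  have hsame : ∀ i', #{A ∈ assignmentsWithCounts c | A i' = a}
      = #{A ∈ assignmentsWithCounts c | A i = a} := fun i' => by
    simpa using card_filter_comp_perm (c := c) (Equiv.swap i i') fun A => A i = a
  calc #{A ∈ assignmentsWithCounts c | A i = a} * Fintype.card ι
      = ∑ i', #{A ∈ assignmentsWithCounts c | A i' = a} := by
        rw [sum_congr rfl fun i' _ => hsame i', sum_const, card_univ, smul_eq_mul, mul_comm]
    _ = ∑ A ∈ assignmentsWithCounts c, #{i' | A i' = a} := by
        simp only [card_filter]
        rw [sum_comm]
    _ = #(assignmentsWithCounts c : Finset (ι → κ)) * c a := by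
        rw [sum_congr rfl fun A hA => mem_assignmentsWithCounts.mp hA a, sum_const, smul_eq_mul]

lemma card_filter_apply_eq_and_apply_eq_mul {i j : ι} (hij : i ≠ j) (a b : κ) :
    (#{A ∈ assignmentsWithCounts c | A i = a ∧ A j = b} : ℝ) * (Fintype.card ι - 1)
      = #{A ∈ assignmentsWithCounts c | A i = a} * (c b - if a = b then 1 else 0) := by
  have hsame : ∀ k ∈ univ.erase i, #{A ∈ assignmentsWithCounts c | A i = a ∧ A k = b}
      = #{A ∈ assignmentsWithCounts c | A i = a ∧ A j = b} := fun k hk => by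
    simpa [Equiv.swap_apply_of_ne_of_ne hij (ne_of_mem_erase hk).symm] using
      card_filter_comp_perm (c := c) (Equiv.swap j k) fun A => A i = a ∧ A j = b
  have hfiber : ∀ A ∈ assignmentsWithCounts c, A i = a →
      (#{k ∈ univ.erase i | A k = b} : ℝ) = c b - if a = b then 1 else 0 := by
    intro A hA hAi
    rw [natCast_card_filter, sum_erase_eq_sub (mem_univ i), ← natCast_card_filter,
      mem_assignmentsWithCounts.mp hA b, hAi]
  -- Double count the pairs `(A, k)` with `k ≠ i`, `A i = a`, `A k = b`.
  calc (#{A ∈ assignmentsWithCounts c | A i = a ∧ A j = b} : ℝ) * (Fintype.card ι - 1)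
      = ∑ k ∈ univ.erase i, (#{A ∈ assignmentsWithCounts c | A i = a ∧ A k = b} : ℝ) := by
        rw [sum_congr rfl fun k hk => congrArg Nat.cast (hsame k hk), sum_const,
          card_erase_of_mem (mem_univ i), card_univ, nsmul_eq_mul,
          Nat.cast_sub (Fintype.card_pos_iff.mpr ⟨i⟩), Nat.cast_one, mul_comm]
    _ = ∑ A ∈ assignmentsWithCounts c with A i = a, (#{k ∈ univ.erase i | A k = b} : ℝ) := by
        simp only [natCast_card_filter, sum_filter, ite_and]
        rw [sum_comm]
        exact sum_congr rfl fun A _ => by split_ifs <;> simp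
    _ = #{A ∈ assignmentsWithCounts c | A i = a} * (c b - if a = b then 1 else 0) := by
        rw [sum_congr rfl fun A hA => hfiber A (mem_filter.mp hA).1 (mem_filter.mp hA).2,
          sum_const, nsmul_eq_mul]

lemma assignmentsWithCounts_nonempty (hc : ∑ a, c a = Fintype.card ι) :
    (assignmentsWithCounts c : Finset (ι → κ)).Nonempty := by
  have hcard : Fintype.card (Σ a, Fin (c a)) = Fintype.card ι := by simp [hc]
  obtain ⟨e⟩ := Fintype.card_eq.mp hcard
  refine ⟨fun i => (e.symm i).1, mem_filter.mpr ⟨mem_univ _, fun a => ?_⟩⟩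
  rw [card_equiv e.symm (t := {p | p.1 = a}) (by simp), card_filter, ← univ_sigma_univ,
    sum_sigma]
  simp [apply_ite]

lemma expect_ite_apply_eq (hS : (assignmentsWithCounts c : Finset (ι → κ)).Nonempty)
    (i : ι) (a : κ) (x : ℝ) :
    𝔼 A ∈ assignmentsWithCounts c, (if A i = a then x else 0) = c a / Fintype.card ι * x := by
  have hι : (Fintype.card ι : ℝ) ≠ 0 := Nat.cast_ne_zero.mpr (Fintype.card_pos_iff.mpr ⟨i⟩).ne'
  have hcount : (#{A ∈ assignmentsWithCounts c | A i = a} : ℝ) * Fintype.card ι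
      = #(assignmentsWithCounts c : Finset (ι → κ)) * c a := by
    exact_mod_cast card_filter_apply_eq_mul_card i a
  have hS' : (#(assignmentsWithCounts c : Finset (ι → κ)) : ℝ) ≠ 0 :=
    Nat.cast_ne_zero.mpr hS.card_pos.ne'
  rw [expect_eq_sum_div_card, sum_ite, sum_const_zero, add_zero, sum_const, nsmul_eq_mul]
  field_simp
  linear_combination x * hcount

lemma expect_ite_apply_eq_and_apply_eq
    (hS : (assignmentsWithCounts c : Finset (ι → κ)).Nonempty)
    {i j : ι} (hij : i ≠ j) (a b : κ) (x : ℝ) :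
    𝔼 A ∈ assignmentsWithCounts c, (if A i = a ∧ A j = b then x else 0)
      = c a * (c b - if a = b then 1 else 0) / (Fintype.card ι * (Fintype.card ι - 1)) * x := by
  have hι : (Fintype.card ι : ℝ) ≠ 0 := Nat.cast_ne_zero.mpr (Fintype.card_pos_iff.mpr ⟨i⟩).ne'
  have hι1 : (Fintype.card ι : ℝ) - 1 ≠ 0 := by
    rw [sub_ne_zero, Ne, ← Nat.cast_one, Nat.cast_inj]
    exact (Fintype.one_lt_card_iff.mpr ⟨i, j, hij⟩).ne'
  have hcount := card_filter_apply_eq_and_apply_eq_mul (c := c) hij a b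
  have hcount₁ : (#{A ∈ assignmentsWithCounts c | A i = a} : ℝ) * Fintype.card ι
      = #(assignmentsWithCounts c : Finset (ι → κ)) * c a := by
    exact_mod_cast card_filter_apply_eq_mul_card i a
  have hS' : (#(assignmentsWithCounts c : Finset (ι → κ)) : ℝ) ≠ 0 :=
    Nat.cast_ne_zero.mpr hS.card_pos.ne'
  rw [expect_eq_sum_div_card, sum_ite, sum_const_zero, add_zero, sum_const, nsmul_eq_mul]
  field_simp
  linear_combination (Fintype.card ι * x) * hcount + (x * (c b - if a = b then 1 else 0)) * hcount₁

end AssignmentsWithCounts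

section PiFinset

variable {ι : Type*} [Fintype ι] [DecidableEq ι] {κ : ι → Type*} {K : Type*} [Semifield K]
  [CharZero K] (t : ∀ i, Finset (κ i))

lemma expect_piFinset_prod (f : ∀ i, κ i → K) :
    𝔼 x ∈ Fintype.piFinset t, ∏ i, f i (x i) = ∏ i, 𝔼 y ∈ t i, f i y := by
  simp only [expect_eq_sum_div_card, ← prod_univ_sum, Fintype.card_piFinset, Nat.cast_prod,
    prod_div_distrib]

variable {t}

lemma expect_piFinset_apply (ht : ∀ i, (t i).Nonempty) (i : ι) (f : κ i → K) :
    𝔼 x ∈ Fintype.piFinset t, f (x i) = 𝔼 y ∈ t i, f y := by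
  let F := Function.update (fun k (_ : κ k) => (1 : K)) i f
  have hF : ∀ k ≠ i, ∀ y, F k y = 1 := fun k hk y => by simp [F, Function.update_of_ne hk]
  calc 𝔼 x ∈ Fintype.piFinset t, f (x i)
      = 𝔼 x ∈ Fintype.piFinset t, ∏ k, F k (x k) := by
        refine expect_congr rfl fun x _ => ?_
        rw [prod_eq_single i (fun k _ hk => hF k hk _) (by simp)]
        simp [F]
    _ = ∏ k, 𝔼 y ∈ t k, F k y := expect_piFinset_prod t F
    _ = 𝔼 y ∈ t i, f y := by
        rw [prod_eq_single i (fun k _ hk => by simp [hF k hk, ht k]) (by simp)]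
        simp [F]

lemma expect_piFinset_apply_mul_apply (ht : ∀ i, (t i).Nonempty) {i j : ι} (hij : i ≠ j)
    (f : κ i → K) (g : κ j → K) :
    𝔼 x ∈ Fintype.piFinset t, f (x i) * g (x j) = (𝔼 y ∈ t i, f y) * 𝔼 y ∈ t j, g y := by
  let F := Function.update (Function.update (fun k (_ : κ k) => (1 : K)) i f) j g
  have hF : ∀ k, k ≠ i ∧ k ≠ j → ∀ y, F k y = 1 := fun k hk y => by
    simp [F, Function.update_of_ne hk.1, Function.update_of_ne hk.2]
  have hFi : F i = f := by simp [F, Function.update_of_ne hij]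
  have hFj : F j = g := by simp [F]
  calc 𝔼 x ∈ Fintype.piFinset t, f (x i) * g (x j)
      = 𝔼 x ∈ Fintype.piFinset t, ∏ k, F k (x k) := by
        refine expect_congr rfl fun x _ => ?_
        rw [prod_eq_mul i j hij (fun k _ hk => hF k hk _) (by simp) (by simp), hFi, hFj]
    _ = ∏ k, 𝔼 y ∈ t k, F k y := expect_piFinset_prod t F
    _ = (𝔼 y ∈ t i, f y) * 𝔼 y ∈ t j, g y := by
        rw [prod_eq_mul i j hij (fun k _ hk => by simp [hF k hk, ht k]) (by simp) (by simp),
          hFi, hFj]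

end PiFinset

section SampleMoments

variable {ι : Type*}

lemma Finset.sum_sub_mean_mul_sub_mean (t : Finset ι) (x y : ι → ℝ) :
    ∑ j ∈ t, (x j - (∑ k ∈ t, x k) / #t) * (y j - (∑ k ∈ t, y k) / #t)
      = ∑ j ∈ t, x j * y j - #t * ((∑ j ∈ t, x j) / #t * ((∑ j ∈ t, y j) / #t)) := by
  rcases t.eq_empty_or_nonempty with rfl | ht
  · simp
  have ht' : (#t : ℝ) ≠ 0 := Nat.cast_ne_zero.mpr ht.card_pos.ne'
  simp only [sub_mul, mul_sub, sum_sub_distrib, ← sum_mul, ← mul_sum, sum_const, nsmul_eq_mul]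
  field_simp
  ring

lemma Finset.sum_sum_ite_eq_add [Fintype ι] [DecidableEq ι] (u e f : ι → ℝ) (c : ℝ) :
    ∑ j, ∑ k, (if j = k then u j else c * (e j * f k))
      = ∑ j, u j + c * ((∑ j, e j) * (∑ k, f k) - ∑ j, e j * f j) := by
  have hsplit : ∀ j k, (if j = k then u j else c * (e j * f k))
      = c * (e j * f k) + if j = k then u j - c * (e j * f j) else 0 := fun j k => by
    split_ifs with h
    · subst h; ring
    · ring
  simp only [hsplit, sum_add_distrib, sum_ite_eq, mem_univ, if_true, sum_sub_distrib,
    ← mul_sum, ← sum_mul]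
  ring

lemma Matrix.posSemidef_gram_div {κ : Type*} [Fintype ι] [Fintype κ] (x : ι → κ → ℝ) {c : ℝ}
    (hc : 0 ≤ c) : (Matrix.of fun p q => (∑ j, x j p * x j q) / c).PosSemidef := by
  have hgram : Matrix.of (fun p q => (∑ j, x j p * x j q) / c)
      = c⁻¹ • ((Matrix.of x).conjTranspose * Matrix.of x) := by
    ext p q
    simp [Matrix.mul_apply, div_eq_inv_mul]
  rw [hgram]
  exact (Matrix.posSemidef_conjTranspose_mul_self _).smul (inv_nonneg.mpr hc)

end SampleMoments

namespace TwoStageDesign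

variable (d : TwoStageDesign)

def treatSets (j : Fin d.J) (a : Fin d.m) : Finset (Finset (Fin (d.n j))) :=
  univ.powersetCard (d.n1 j a)

def clusterMean (j : Fin d.J) (z : Bool) (a : Fin d.m) (s : Finset (Fin (d.n j))) : ℝ :=
  (∑ i ∈ univ.filter (fun i => decide (i ∈ s) = z), d.Y j i z a) /
    (#(univ.filter fun i : Fin (d.n j) => decide (i ∈ s) = z) : ℝ)

/-- `μ_j(z,a)`. -/
def condMean (j : Fin d.J) (z : Bool) (a : Fin d.m) : ℝ :=
  𝔼 s ∈ d.treatSets j a, d.clusterMean j z a s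

lemma mechA_eq_assignmentsWithCounts : d.mechA = assignmentsWithCounts d.Jc := by
  ext A
  simp [mechA, mem_assignmentsWithCounts]

lemma mechA_nonempty (hJsum : ∑ a, d.Jc a = d.J) : d.mechA.Nonempty := by
  rw [mechA_eq_assignmentsWithCounts]
  exact assignmentsWithCounts_nonempty (by simpa using hJsum)

lemma treatSets_nonempty {j : Fin d.J} {a : Fin d.m} (h : d.n1 j a ≤ d.n j) :
    (d.treatSets j a).Nonempty :=
  powersetCard_nonempty.mpr (by simpa using h)

lemma treatA_eq_piFinset (A : Fin d.J → Fin d.m) :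
    d.treatA A = Fintype.piFinset fun j => d.treatSets j (A j) := by
  ext S
  simp [treatA, treatSets, mem_powersetCard]

lemma hatYj_eq_clusterMean (A : Fin d.J → Fin d.m) (S : (j : Fin d.J) → Finset (Fin (d.n j)))
    (z : Bool) (j : Fin d.J) : d.hatYj A S z j = d.clusterMean j z (A j) (S j) := by
  unfold hatYj clusterMean Yobs
  congr 1
  exact sum_congr rfl fun i hi => by rw [(mem_filter.mp hi).2]

lemma hatY_eq_sum_ite (A : Fin d.J → Fin d.m) (S : (j : Fin d.J) → Finset (Fin (d.n j)))
    (z : Bool) (a : Fin d.m) :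
    d.hatY A S z a = (∑ j, if A j = a then d.clusterMean j z a (S j) else 0) / d.Jc a := by
  unfold hatY
  rw [sum_filter]
  congr 1
  exact sum_congr rfl fun j _ => by split_ifs with h <;> simp [hatYj_eq_clusterMean, h]

section Expectation

variable {f g : (Fin d.J → Fin d.m) → ((j : Fin d.J) → Finset (Fin (d.n j))) → ℝ}

lemma expec_eq_expect (f : (Fin d.J → Fin d.m) → ((j : Fin d.J) → Finset (Fin (d.n j))) → ℝ) :
    d.expec f = 𝔼 A ∈ d.mechA, 𝔼 S ∈ d.treatA A, f A S := by
  simp only [expec, expect_eq_sum_div_card, sum_div, div_div, mul_comm]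

lemma expec_congr (h : ∀ A ∈ d.mechA, ∀ S, f A S = g A S) : d.expec f = d.expec g := by
  simp only [expec_eq_expect]
  exact expect_congr rfl fun A hA => expect_congr rfl fun S _ => h A hA S

lemma expec_sub : d.expec (fun A S => f A S - g A S) = d.expec f - d.expec g := by
  simp only [expec_eq_expect, expect_sub_distrib]

lemma expec_const_mul (c : ℝ) : d.expec (fun A S => c * f A S) = c * d.expec f := by
  simp only [expec_eq_expect, mul_expect]

lemma expec_div_const (c : ℝ) : d.expec (fun A S => f A S / c) = d.expec f / c := by
  simp only [expec_eq_expect, expect_div]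

lemma expec_sum {ι : Type*} (t : Finset ι)
    (F : ι → (Fin d.J → Fin d.m) → ((j : Fin d.J) → Finset (Fin (d.n j))) → ℝ) :
    d.expec (fun A S => ∑ x ∈ t, F x A S) = ∑ x ∈ t, d.expec (F x) := by
  simp only [expec_eq_expect, expect_sum_comm]

lemma expec_const (hJsum : ∑ a, d.Jc a = d.J) (hn1 : ∀ j a, d.n1 j a ≤ d.n j) (c : ℝ) :
    d.expec (fun _ _ => c) = c := by
  simp only [expec_eq_expect]
  rw [expect_congr rfl fun A _ => expect_const ?_ c, expect_const (d.mechA_nonempty hJsum)]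
  rw [treatA_eq_piFinset]
  exact Fintype.piFinset_nonempty.mpr fun j => d.treatSets_nonempty (hn1 j _)

lemma cov_eq_expec_mul_sub (hJsum : ∑ a, d.Jc a = d.J) (hn1 : ∀ j a, d.n1 j a ≤ d.n j) :
    d.cov f g = d.expec (fun A S => f A S * g A S) - d.expec f * d.expec g := by
  have hexpand : ∀ A S, (f A S - d.expec f) * (g A S - d.expec g)
      = (f A S * g A S - d.expec g * f A S) - (d.expec f * g A S - d.expec f * d.expec g) :=
    fun A S => by ring
  simp only [cov, hexpand, expec_sub, expec_const_mul, expec_const d hJsum hn1]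
  ring

end Expectation

lemma expect_treatA_apply (hn1 : ∀ j a, d.n1 j a ≤ d.n j) (A : Fin d.J → Fin d.m) (j : Fin d.J)
    (φ : Finset (Fin (d.n j)) → ℝ) :
    𝔼 S ∈ d.treatA A, φ (S j) = 𝔼 s ∈ d.treatSets j (A j), φ s := by
  rw [treatA_eq_piFinset]
  exact expect_piFinset_apply (fun k => d.treatSets_nonempty (hn1 k _)) j φ

lemma expect_treatA_apply_mul_apply (hn1 : ∀ j a, d.n1 j a ≤ d.n j) (A : Fin d.J → Fin d.m)
    {j k : Fin d.J} (hjk : j ≠ k) (φ : Finset (Fin (d.n j)) → ℝ) (ψ : Finset (Fin (d.n k)) → ℝ) :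
    𝔼 S ∈ d.treatA A, φ (S j) * ψ (S k)
      = (𝔼 s ∈ d.treatSets j (A j), φ s) * 𝔼 s ∈ d.treatSets k (A k), ψ s := by
  rw [treatA_eq_piFinset]
  exact expect_piFinset_apply_mul_apply (fun k => d.treatSets_nonempty (hn1 k _)) hjk φ ψ

lemma expec_ite_apply (hJsum : ∑ a, d.Jc a = d.J) (hn1 : ∀ j a, d.n1 j a ≤ d.n j)
    (j : Fin d.J) (a : Fin d.m) (φ : Finset (Fin (d.n j)) → ℝ) :
    d.expec (fun A S => if A j = a then φ (S j) else 0)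
      = d.Jc a / d.J * 𝔼 s ∈ d.treatSets j a, φ s := by
  have hA := d.mechA_eq_assignmentsWithCounts ▸ d.mechA_nonempty hJsum
  rw [expec_eq_expect, mechA_eq_assignmentsWithCounts]
  calc 𝔼 A ∈ assignmentsWithCounts d.Jc, 𝔼 S ∈ d.treatA A, (if A j = a then φ (S j) else 0)
      = 𝔼 A ∈ assignmentsWithCounts d.Jc,
          (if A j = a then 𝔼 s ∈ d.treatSets j a, φ s else 0) :=
        expect_congr rfl fun A _ => by
          split_ifs with h
          · rw [expect_treatA_apply d hn1, h]
          · simp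
    _ = d.Jc a / d.J * 𝔼 s ∈ d.treatSets j a, φ s := by
        simpa using expect_ite_apply_eq hA j a _

lemma expec_ite_apply_and_apply (hJsum : ∑ a, d.Jc a = d.J) (hn1 : ∀ j a, d.n1 j a ≤ d.n j)
    {j k : Fin d.J} (hjk : j ≠ k) (a b : Fin d.m)
    (φ : Finset (Fin (d.n j)) → ℝ) (ψ : Finset (Fin (d.n k)) → ℝ) :
    d.expec (fun A S => if A j = a ∧ A k = b then φ (S j) * ψ (S k) else 0)
      = d.Jc a * (d.Jc b - if a = b then 1 else 0) / (d.J * (d.J - 1))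
          * ((𝔼 s ∈ d.treatSets j a, φ s) * 𝔼 s ∈ d.treatSets k b, ψ s) := by
  have hA := d.mechA_eq_assignmentsWithCounts ▸ d.mechA_nonempty hJsum
  rw [expec_eq_expect, mechA_eq_assignmentsWithCounts]
  calc 𝔼 A ∈ assignmentsWithCounts d.Jc, 𝔼 S ∈ d.treatA A,
        (if A j = a ∧ A k = b then φ (S j) * ψ (S k) else 0)
      = 𝔼 A ∈ assignmentsWithCounts d.Jc, (if A j = a ∧ A k = b then
          (𝔼 s ∈ d.treatSets j a, φ s) * 𝔼 s ∈ d.treatSets k b, ψ s else 0) :=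
        expect_congr rfl fun A _ => by
          split_ifs with h
          · rw [expect_treatA_apply_mul_apply d hn1 A hjk, h.1, h.2]
          · simp
    _ = _ := by simpa using expect_ite_apply_eq_and_apply_eq hA hjk a b _

lemma expec_hatY (hJsum : ∑ a, d.Jc a = d.J) (hn1 : ∀ j a, d.n1 j a ≤ d.n j) (z : Bool)
    {a : Fin d.m} (ha : d.Jc a ≠ 0) :
    d.expec (fun A S => d.hatY A S z a) = (∑ j, d.condMean j z a) / d.J := by
  simp only [hatY_eq_sum_ite, expec_div_const, expec_sum, expec_ite_apply d hJsum hn1, ← mul_sum,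
    condMean]
  field_simp

lemma expec_hatY_mul_hatY (hJsum : ∑ a, d.Jc a = d.J) (hn1 : ∀ j a, d.n1 j a ≤ d.n j)
    (z z' : Bool) (a b : Fin d.m) :
    d.expec (fun A S => d.hatY A S z a * d.hatY A S z' b)
      = ((if a = b then d.Jc a / d.J *
            ∑ j, 𝔼 s ∈ d.treatSets j a, d.clusterMean j z a s * d.clusterMean j z' a s
          else 0)
        + d.Jc a * (d.Jc b - if a = b then 1 else 0) / (d.J * (d.J - 1))
          * ((∑ j, d.condMean j z a) * (∑ j, d.condMean j z' b)
            - ∑ j, d.condMean j z a * d.condMean j z' b)) / (d.Jc a * d.Jc b) := by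
  have hprod : ∀ A S, d.hatY A S z a * d.hatY A S z' b
      = (∑ j, ∑ k, if A j = a ∧ A k = b then
          d.clusterMean j z a (S j) * d.clusterMean k z' b (S k) else 0) / (d.Jc a * d.Jc b) :=
    fun A S => by
      simp only [hatY_eq_sum_ite, div_mul_div_comm, sum_mul_sum, ite_zero_mul_ite_zero]
  have hterm : ∀ j k, d.expec (fun A S => if A j = a ∧ A k = b then
        d.clusterMean j z a (S j) * d.clusterMean k z' b (S k) else 0)
      = if j = k then
          (if a = b then d.Jc a / d.J *
            𝔼 s ∈ d.treatSets j a, d.clusterMean j z a s * d.clusterMean j z' a s else 0)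
        else d.Jc a * (d.Jc b - if a = b then 1 else 0) / (d.J * (d.J - 1))
          * (d.condMean j z a * d.condMean k z' b) := by
    intro j k
    rcases eq_or_ne j k with rfl | hjk
    · rcases eq_or_ne a b with rfl | hab
      · simpa using d.expec_ite_apply hJsum hn1 j a
          fun s => d.clusterMean j z a s * d.clusterMean j z' a s
      · simpa [hab] using (d.expec_congr fun A _ S =>
          if_neg fun h => hab (h.1.symm.trans h.2)).trans (d.expec_const hJsum hn1 0)
    · simpa [hjk, condMean] using d.expec_ite_apply_and_apply hJsum hn1 hjk a b _ _
  simp only [hprod, expec_div_const, expec_sum, hterm, sum_sum_ite_eq_add]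
  split_ifs <;> simp [mul_sum]

lemma sigBhat_eq {A : Fin d.J → Fin d.m} (hA : A ∈ d.mechA)
    (S : (j : Fin d.J) → Finset (Fin (d.n j))) (z z' : Bool) (a : Fin d.m) :
    d.sigBhat A S z z' a
      = ((∑ j, if A j = a then d.clusterMean j z a (S j) * d.clusterMean j z' a (S j) else 0)
          - d.Jc a * (d.hatY A S z a * d.hatY A S z' a)) / (d.Jc a - 1) := by
  have hcard : #{j | A j = a} = d.Jc a := by
    rw [mechA_eq_assignmentsWithCounts, mem_assignmentsWithCounts] at hA
    exact hA a
  unfold sigBhat hatY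
  rw [← hcard, sum_sub_mean_mul_sub_mean, sum_filter]
  congr 2
  exact sum_congr rfl fun j _ => by split_ifs with h <;> simp [hatYj_eq_clusterMean, h]

lemma expec_scaled_sigBhat (hJsum : ∑ a, d.Jc a = d.J) (hn1 : ∀ j a, d.n1 j a ≤ d.n j)
    (z z' : Bool) (a : Fin d.m) :
    d.expec (fun A S => d.J / d.Jc a * d.sigBhat A S z z' a)
      = d.J / (d.Jc a * (d.Jc a - 1)) *
          (d.Jc a / d.J *
              ∑ j, 𝔼 s ∈ d.treatSets j a, d.clusterMean j z a s * d.clusterMean j z' a s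
            - d.Jc a * d.expec (fun A S => d.hatY A S z a * d.hatY A S z' a)) := by
  have hpt : ∀ A ∈ d.mechA, ∀ S, d.J / d.Jc a * d.sigBhat A S z z' a
      = d.J / (d.Jc a * (d.Jc a - 1)) *
          ((∑ j, if A j = a then d.clusterMean j z a (S j) * d.clusterMean j z' a (S j) else 0)
            - d.Jc a * (d.hatY A S z a * d.hatY A S z' a)) := fun A hA S => by
    rw [d.sigBhat_eq hA, div_mul_div_comm, div_mul_eq_mul_div]
  rw [d.expec_congr hpt, expec_const_mul, expec_sub, expec_sum, expec_const_mul,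
    sum_congr rfl fun j _ => d.expec_ite_apply hJsum hn1 j a fun s =>
      d.clusterMean j z a s * d.clusterMean j z' a s, ← mul_sum]

lemma expec_Dhat_sub_D_apply (hJ : 2 ≤ d.J) (hJc : ∀ a, 2 ≤ d.Jc a)
    (hJsum : ∑ a, d.Jc a = d.J) (hn1 : ∀ j a, d.n1 j a ≤ d.n j) (a b : Fin d.m) (z z' : Bool) :
    (if a = b then d.expec (fun A S => d.J / d.Jc a * d.sigBhat A S z z' a) else 0)
        - d.J * d.cov (fun A S => d.hatY A S z a) (fun A S => d.hatY A S z' b)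
      = (∑ j, (d.condMean j z a - (∑ k, d.condMean k z a) / d.J)
          * (d.condMean j z' b - (∑ k, d.condMean k z' b) / d.J)) / (d.J - 1) := by
  have hJa := hJc a
  have hJb := hJc b
  have hJ0 : (d.J : ℝ) ≠ 0 := by norm_cast; omega
  have hJ1 : (d.J : ℝ) - 1 ≠ 0 := by rw [sub_ne_zero]; norm_cast; omega
  have hJa0 : (d.Jc a : ℝ) ≠ 0 := by norm_cast; omega
  have hJb0 : (d.Jc b : ℝ) ≠ 0 := by norm_cast; omega
  have hJa1 : (d.Jc a : ℝ) - 1 ≠ 0 := by rw [sub_ne_zero]; norm_cast; omega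
  have hcentered := sum_sub_mean_mul_sub_mean univ (d.condMean · z a) (d.condMean · z' b)
  rw [card_univ, Fintype.card_fin] at hcentered
  rw [d.cov_eq_expec_mul_sub hJsum hn1, d.expec_hatY hJsum hn1 z (by omega),
    d.expec_hatY hJsum hn1 z' (by omega), hcentered]
  split_ifs with hab
  · subst hab
    rw [d.expec_scaled_sigBhat hJsum hn1, d.expec_hatY_mul_hatY hJsum hn1]
    simp only [if_true]
    field_simp
    ring
  · rw [d.expec_hatY_mul_hatY hJsum hn1]
    simp only [hab, if_false]
    field_simp
    ring

end TwoStageDesign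

theorem Dhat_conservative_general (d : TwoStageDesign)
    (hJ : 2 ≤ d.J)
    (hJc : ∀ a, 2 ≤ d.Jc a) (hJsum : ∑ a, d.Jc a = d.J)
    (hn1hi : ∀ j a, d.n1 j a ≤ d.n j - 1) :
    Matrix.PosSemidef
      (Matrix.of fun p q : Fin d.m × Bool =>
        (if p.1 = q.1 then
            d.expec (fun A S => ((d.J : ℝ) / (d.Jc p.1 : ℝ)) * d.sigBhat A S p.2 q.2 p.1)
          else 0) -
        (d.J : ℝ) *
          d.cov (fun A S => d.hatY A S p.2 p.1) (fun A S => d.hatY A S q.2 q.1)) := by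
  have hn1 : ∀ j a, d.n1 j a ≤ d.n j := fun j a => (hn1hi j a).trans (Nat.sub_le _ _)
  have hJ1 : (0 : ℝ) ≤ d.J - 1 := by
    rw [sub_nonneg]; exact_mod_cast (by omega : 1 ≤ d.J)
  convert Matrix.posSemidef_gram_div (fun j (p : Fin d.m × Bool) =>
    d.condMean j p.2 p.1 - (∑ k, d.condMean k p.2 p.1) / d.J) hJ1 using 1
  ext p q
  exact d.expec_Dhat_sub_D_apply hJ hJc hJsum hn1 p.1 q.1 p.2 q.2

/-- **Conservativeness of the covariance estimator (Theorem 3).** Under the two-stage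
randomized design with `J_a ≥ 2` for all mechanisms `a`, the `2m × 2m` matrix
`E[D̂] − D` is positive semidefinite, where `D = J·cov(Ŷ)` and `D̂` is the block-diagonal
estimator whose `a`-th `2×2` block is `(J/J_a) [[σ̂_b²(1,a), σ̂_b²(1,0;a)],
[σ̂_b²(1,0;a), σ̂_b²(0,a)]]`.  Rows and columns are indexed by pairs `(a, z)` with
`a` a mechanism and `z` a treatment condition. -/
theorem Dhat_conservative (d : TwoStageDesign)
    (hJ : 2 ≤ d.J) (hn : ∀ j, 2 ≤ d.n j)
    (hJc : ∀ a, 2 ≤ d.Jc a) (hJsum : ∑ a, d.Jc a = d.J)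
    (hn1lo : ∀ j a, 1 ≤ d.n1 j a) (hn1hi : ∀ j a, d.n1 j a ≤ d.n j - 1) :
    Matrix.PosSemidef
      (Matrix.of fun p q : Fin d.m × Bool =>
        (if p.1 = q.1 then
            d.expec (fun A S => ((d.J : ℝ) / (d.Jc p.1 : ℝ)) * d.sigBhat A S p.2 q.2 p.1)
          else 0) -
        (d.J : ℝ) *
          d.cov (fun A S => d.hatY A S p.2 p.1) (fun A S => d.hatY A S q.2 q.1)) :=
  Dhat_conservative_general d hJ hJc hJsum hn1hi
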